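/- arXiv:0905.4482 — 5 statements merged into one kernel-verified Lean document; each statement's English description precedes it below -/
import Mathlib

section
/- Let v be a vector in ℝ^d and let T be a positive integer. Let v_T denote a vector consisting of the T largest-magnitude coordinates of v (with all other coordinates set to zero, ties broken arbitrarily). Then ‖v − v_T‖₂ ≤ ‖v‖₁ / (2√T). -/
/-- The Euclidean (ℓ2) norm of a finitely-indexed real vector. -/
noncomputable def l2 {ι : Type*} [Fintype ι] (v : ι → ℝ) : ℝ :=
  Real.sqrt (∑ i, (v i) ^ 2)

/-- The ℓ1 norm of a finitely-indexed real vector. -/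
noncomputable def l1 {ι : Type*} [Fintype ι] (v : ι → ℝ) : ℝ :=
  ∑ i, |v i|

/-- The restriction of a vector to a set of coordinates (zero elsewhere). -/
def restr {d : ℕ} (S : Finset (Fin d)) (v : Fin d → ℝ) : Fin d → ℝ :=
  fun i => if i ∈ S then v i else 0

/-!
Let `a` and `b` be the ℓ1 masses of `v` on `S` and off `S`. Every coordinate off `S` is
dominated by each of the `T` kept ones, hence by their mean `a / T`, so the tail energy is at
most `(a / T) * b`. By AM-GM, `4ab ≤ (a + b)² = ‖v‖₁²`, which gives
`‖v - v_T‖₂² ≤ ‖v‖₁² / (4T)`.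
-/

open Finset

lemma l2_sub_restr {d : ℕ} (S : Finset (Fin d)) (v : Fin d → ℝ) :
    l2 (v - restr S v) = √(∑ j ∈ Sᶜ, v j ^ 2) := by
  rw [l2, ← sum_add_sum_compl S]
  have h_on : ∀ i ∈ S, (v - restr S v) i ^ 2 = 0 := fun i hi => by simp [restr, hi]
  have h_off : ∀ j ∈ Sᶜ, (v - restr S v) j ^ 2 = v j ^ 2 := fun j hj => by
    simp [restr, mem_compl.mp hj]
  rw [sum_eq_zero h_on, sum_congr rfl h_off, zero_add]

lemma l1_eq_sum_add_sum_compl {ι : Type*} [Fintype ι] [DecidableEq ι] (S : Finset ι)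
    (v : ι → ℝ) : l1 v = ∑ i ∈ S, |v i| + ∑ j ∈ Sᶜ, |v j| :=
  (sum_add_sum_compl S _).symm

section LargestCoordinates

variable {ι : Type*} {S : Finset ι} {v : ι → ℝ}

lemma card_mul_abs_le_sum_abs (hbig : ∀ i ∈ S, ∀ j ∉ S, |v j| ≤ |v i|) {j : ι} (hj : j ∉ S) :
    S.card * |v j| ≤ ∑ i ∈ S, |v i| := by
  rw [← nsmul_eq_mul, ← sum_const]
  exact sum_le_sum fun i hi => hbig i hi j hj

lemma card_mul_sum_sq_compl_le [Fintype ι] [DecidableEq ι] (hbig : ∀ i ∈ S, ∀ j ∉ S, |v j| ≤ |v i|) :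
    S.card * ∑ j ∈ Sᶜ, v j ^ 2 ≤ (∑ i ∈ S, |v i|) * ∑ j ∈ Sᶜ, |v j| := by
  rw [mul_sum, mul_sum]
  refine sum_le_sum fun j hj => ?_
  rw [← sq_abs, sq, ← mul_assoc]
  exact mul_le_mul_of_nonneg_right
    (card_mul_abs_le_sum_abs hbig (mem_compl.mp hj)) (abs_nonneg _)

end LargestCoordinates

lemma sqrt_le_add_div_two_sqrt {x a b t : ℝ} (ht : 0 < t) (hab : 0 ≤ a + b)
    (h : t * x ≤ a * b) : √x ≤ (a + b) / (2 * √t) := by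
  rw [Real.sqrt_le_iff]
  refine ⟨by positivity, ?_⟩
  rw [div_pow, mul_pow, Real.sq_sqrt ht.le, le_div_iff₀ (by positivity)]
  nlinarith [four_mul_le_sq_add a b]

/-- If `v_T = restr S v` keeps a set `S` of `T` largest-magnitude
coordinates of `v`, then `‖v − v_T‖₂ ≤ ‖v‖₁ / (2√T)`. -/
theorem stmt0 (d T : ℕ) (hT : 0 < T) (v : Fin d → ℝ)
    (S : Finset (Fin d)) (hcard : S.card = T)
    (hbig : ∀ i ∈ S, ∀ j ∉ S, |v j| ≤ |v i|) :
    l2 (v - restr S v) ≤ l1 v / (2 * Real.sqrt T) := by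
  rw [l2_sub_restr, l1_eq_sum_add_sum_compl S]
  refine sqrt_le_add_div_two_sqrt (by exact_mod_cast hT) (by positivity) ?_
  exact hcard ▸ card_mul_sum_sq_compl_le hbig
end

section
/- (Local approximation.) Let Φ be an m×d real matrix satisfying the restricted isometry condition with parameters (2s, ε), where 0 < ε ≤ 0.03. Then for every s-sparse vector x ∈ ℝ^d and every index set I ⊆ {1,…,d} with |I| ≤ s, the observation vector y = Φ*Φx satisfies ‖y|_I − x|_I‖₂ ≤ 2.03 ε ‖x‖₂. -/
/-- A vector is `s`-sparse if it has at most `s` nonzero coordinates. -/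
def Sparse {d : ℕ} (s : ℕ) (v : Fin d → ℝ) : Prop :=
  {i | v i ≠ 0}.ncard ≤ s

/-- `Φ` satisfies the restricted isometry condition with parameters `(r, ε)`:
`(1−ε)‖x‖₂ ≤ ‖Φx‖₂ ≤ (1+ε)‖x‖₂` for every `r`-sparse `x`. -/
def RIC {m d : ℕ} (Φ : Matrix (Fin m) (Fin d) ℝ) (r : ℕ) (ε : ℝ) : Prop :=
  ∀ v : Fin d → ℝ, Sparse r v →
    (1 - ε) * l2 v ≤ l2 (Φ.mulVec v) ∧ l2 (Φ.mulVec v) ≤ (1 + ε) * l2 v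

/-!
With `u = (Φ*Φx − x)|_I` one has `‖u‖² = ⟨u, Φ*Φx − x⟩ = ⟨Φu, Φx⟩ − ⟨u, x⟩`. The vectors `u` and `x`
are jointly supported on at most `2s` coordinates, so polarizing the squared isometry bound
`|‖Φv‖² − ‖v‖²| ≤ (2ε + ε²)‖v‖²` gives `|⟨Φu, Φx⟩ − ⟨u, x⟩| ≤ (2ε + ε²)‖u‖‖x‖`. Hence
`‖u‖ ≤ (2ε + ε²)‖x‖ ≤ 2.03 ε ‖x‖`.
-/

open Matrix Function

section L2

variable {ι : Type*} [Fintype ι]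

lemma l2_nonneg (v : ι → ℝ) : 0 ≤ l2 v := Real.sqrt_nonneg _

lemma l2_sq (v : ι → ℝ) : l2 v ^ 2 = v ⬝ᵥ v := by
  rw [l2, Real.sq_sqrt (Finset.sum_nonneg fun _ _ => sq_nonneg _)]
  exact Finset.sum_congr rfl fun i _ => sq (v i)

lemma l2_eq_zero {v : ι → ℝ} : l2 v = 0 ↔ v = 0 := by
  rw [← sq_eq_zero_iff, l2_sq, dotProduct_self_eq_zero]

lemma l2_smul_sq (t : ℝ) (v : ι → ℝ) : l2 (t • v) ^ 2 = t ^ 2 * l2 v ^ 2 := by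
  simp only [l2_sq, dotProduct_smul, smul_dotProduct, smul_eq_mul]; ring

end L2

section Restr

variable {d : ℕ} (S : Finset (Fin d))

lemma support_restr_subset (v : Fin d → ℝ) : support (restr S v) ⊆ S := by
  intro i hi
  by_contra h
  exact hi (if_neg h)

lemma restr_sub (v w : Fin d → ℝ) : restr S (v - w) = restr S v - restr S w := by
  ext i
  by_cases h : i ∈ S <;> simp [restr, h]

lemma restr_dotProduct_restr (v w : Fin d → ℝ) : restr S v ⬝ᵥ restr S w = restr S v ⬝ᵥ w := by
  refine Finset.sum_congr rfl fun i _ => ?_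
  by_cases h : i ∈ S <;> simp [restr, h]

end Restr

lemma sparse_of_support_subset {d s : ℕ} {v : Fin d → ℝ} {S : Set (Fin d)}
    (h : support v ⊆ S) (hS : S.ncard ≤ s) : Sparse s v :=
  (Set.ncard_le_ncard h (Set.toFinite S)).trans hS

lemma sparse_add_smul {d r : ℕ} {a b : Fin d → ℝ} (h : (support a ∪ support b).ncard ≤ r)
    (t : ℝ) : Sparse r (a + t • b) :=
  sparse_of_support_subset ((support_add a _).trans
    (Set.union_subset_union_right _ (support_const_smul_subset t b))) h

namespace RIC

variable {m d r : ℕ} {Φ : Matrix (Fin m) (Fin d) ℝ} {ε : ℝ}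

lemma abs_l2_sq_sub_le (hΦ : RIC Φ r ε) (hε : ε ≤ 1) {v : Fin d → ℝ} (hv : Sparse r v) :
    |l2 (Φ *ᵥ v) ^ 2 - l2 v ^ 2| ≤ (2 * ε + ε ^ 2) * l2 v ^ 2 := by
  obtain ⟨hlow, hup⟩ := hΦ v hv
  have hv0 := l2_nonneg v
  have hΦv0 := l2_nonneg (Φ *ᵥ v)
  rw [abs_le]
  constructor <;> nlinarith [mul_nonneg (sub_nonneg.2 hε) hv0]

lemma abs_dotProduct_sub_le (hΦ : RIC Φ r ε) (hε : ε ≤ 1) {a b : Fin d → ℝ}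
    (hadd : Sparse r (a + b)) (hsub : Sparse r (a - b)) :
    |(Φ *ᵥ a) ⬝ᵥ (Φ *ᵥ b) - a ⬝ᵥ b| ≤ (2 * ε + ε ^ 2) / 2 * (l2 a ^ 2 + l2 b ^ 2) := by
  have hp := hΦ.abs_l2_sq_sub_le hε hadd
  have hm := hΦ.abs_l2_sq_sub_le hε hsub
  simp only [l2_sq, mulVec_add, mulVec_sub, add_dotProduct, dotProduct_add, sub_dotProduct,
    dotProduct_sub, dotProduct_comm b, dotProduct_comm (Φ *ᵥ b)] at hp hm ⊢
  rw [abs_le] at hp hm ⊢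
  constructor <;> linarith [hp.1, hp.2, hm.1, hm.2]

lemma abs_dotProduct_sub_le_mul (hΦ : RIC Φ r ε) (hε : ε ≤ 1) {a b : Fin d → ℝ}
    (hab : (support a ∪ support b).ncard ≤ r) :
    |(Φ *ᵥ a) ⬝ᵥ (Φ *ᵥ b) - a ⬝ᵥ b| ≤ (2 * ε + ε ^ 2) * l2 a * l2 b := by
  rcases eq_or_ne a 0 with rfl | ha
  · simp [l2_eq_zero.2 rfl]
  rcases eq_or_ne b 0 with rfl | hb
  · simp [l2_eq_zero.2 rfl]
  have ha' : 0 < l2 a := (l2_nonneg a).lt_of_ne' (l2_eq_zero.not.2 ha)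
  have hb' : 0 < l2 b := (l2_nonneg b).lt_of_ne' (l2_eq_zero.not.2 hb)
  -- rescale `b` to the length of `a`, where the polarization bound is sharpest
  obtain ⟨t, ht, htb⟩ : ∃ t, 0 < t ∧ t * l2 b = l2 a :=
    ⟨l2 a / l2 b, div_pos ha' hb', div_mul_cancel₀ _ hb'.ne'⟩
  have key := hΦ.abs_dotProduct_sub_le hε (sparse_add_smul hab t)
    (by simpa [sub_eq_add_neg] using sparse_add_smul hab (-t))
  rw [l2_smul_sq, mulVec_smul, dotProduct_smul, dotProduct_smul, smul_eq_mul, smul_eq_mul,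
    ← mul_sub, abs_mul, abs_of_pos ht] at key
  refine le_of_mul_le_mul_left (key.trans_eq ?_) ht
  rw [← htb]; ring

end RIC

/-- **Local approximation.** Under RIC with parameters `(2s, ε)`,
for every `s`-sparse `x` and every `I` with `|I| ≤ s`, the observation vector
`y = Φ*Φx` satisfies `‖y|_I − x|_I‖₂ ≤ 2.03 ε ‖x‖₂`. -/
theorem stmt2 (m d s : ℕ) (ε : ℝ) (hε0 : 0 < ε) (hε : ε ≤ 0.03)
    (Φ : Matrix (Fin m) (Fin d) ℝ) (hΦ : RIC Φ (2 * s) ε)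
    (x : Fin d → ℝ) (hx : Sparse s x)
    (I : Finset (Fin d)) (hI : I.card ≤ s) :
    l2 (restr I (Φ.transpose.mulVec (Φ.mulVec x)) - restr I x) ≤ 2.03 * ε * l2 x := by
  set u := restr I (Φᵀ *ᵥ (Φ *ᵥ x)) - restr I x
  have hu : u = restr I (Φᵀ *ᵥ (Φ *ᵥ x) - x) := (restr_sub I _ _).symm
  have hsq : l2 u ^ 2 = (Φ *ᵥ u) ⬝ᵥ (Φ *ᵥ x) - u ⬝ᵥ x := by
    rw [l2_sq, hu, restr_dotProduct_restr, ← hu, dotProduct_sub, dotProduct_mulVec,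
      vecMul_transpose]
  have hsupp : (support u ∪ support x).ncard ≤ 2 * s := by
    have hxs : (support x).ncard ≤ s := hx
    calc (support u ∪ support x).ncard ≤ (↑I ∪ support x).ncard :=
          Set.ncard_le_ncard (Set.union_subset_union_left _ (hu ▸ support_restr_subset I _))
            (Set.toFinite _)
      _ ≤ I.card + (support x).ncard := by
          rw [← Set.ncard_coe_finset]; exact Set.ncard_union_le _ _
      _ ≤ 2 * s := by omega
  have hbound : l2 u * l2 u ≤ l2 u * ((2 * ε + ε ^ 2) * l2 x) := by
    calc l2 u * l2 u = (Φ *ᵥ u) ⬝ᵥ (Φ *ᵥ x) - u ⬝ᵥ x := by rw [← sq, hsq]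
      _ ≤ (2 * ε + ε ^ 2) * l2 u * l2 x :=
        (le_abs_self _).trans (hΦ.abs_dotProduct_sub_le_mul (by linarith) hsupp)
      _ = l2 u * ((2 * ε + ε ^ 2) * l2 x) := by ring
  have hδ : 2 * ε + ε ^ 2 ≤ 2.03 * ε := by nlinarith
  rcases (l2_nonneg u).eq_or_lt with hu0 | hu0
  · rw [← hu0]; exact mul_nonneg (by positivity) (l2_nonneg x)
  · calc l2 u ≤ (2 * ε + ε ^ 2) * l2 x := le_of_mul_le_mul_left hbound hu0
      _ ≤ 2.03 * ε * l2 x := mul_le_mul_of_nonneg_right hδ (l2_nonneg x)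
end

section
/- (Almost orthogonality of columns.) Let Φ be an m×d real matrix satisfying the restricted isometry condition with parameters (2s, ε), where 0 < ε ≤ 0.03. Consider two disjoint index sets I, J ⊆ {1,…,d} with |I ∪ J| ≤ 2s. Let P_I and P_J denote the orthogonal projections in ℝ^m onto range(Φ_I) and range(Φ_J) respectively, where Φ_I is the column submatrix of Φ with columns indexed by I. Then the operator norm satisfies ‖P_I P_J‖_{2→2} ≤ 2.2 ε. -/
/-- The span of the columns of `Φ` indexed by `I`, i.e. `range (Φ_I)`,
as a subspace of `ℝ^m` with the Euclidean structure. -/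
noncomputable def colSpan {m d : ℕ} (Φ : Matrix (Fin m) (Fin d) ℝ) (I : Finset (Fin d)) :
    Submodule ℝ (EuclideanSpace ℝ (Fin m)) :=
  Submodule.span ℝ ((fun i => (WithLp.toLp 2 (fun j => Φ j i) : EuclideanSpace ℝ (Fin m))) '' ↑I)

/-! For disjointly supported `u, v`, polarization together with the RIC bounds on `Φ (u ± v)`
gives `⟪Φ u, Φ v⟫ ≤ 2 ε ‖u‖ ‖v‖`, and the lower RIC bound turns this into
`⟪x, y⟫ ≤ 2 ε / (1 - ε)² ‖x‖ ‖y‖` for `x ∈ range Φ_I`, `y ∈ range Φ_J`.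
Whenever two subspaces satisfy such a bound with constant `δ`, the vector `x = P_I P_J z`
satisfies `‖x‖² = ⟪x, P_J z⟫ ≤ δ ‖x‖ ‖z‖`, so `‖P_I P_J‖ ≤ δ`; and `2 / (1 - ε)² ≤ 2.2`
for `ε ≤ 0.03`. -/

open Finset RealInnerProductSpace

section AlmostOrthogonalSubspaces

variable {E : Type*} [NormedAddCommGroup E] [InnerProductSpace ℝ E]

theorem norm_starProjection_starProjection_le {K L : Submodule ℝ E}
    [K.HasOrthogonalProjection] [L.HasOrthogonalProjection] {δ : ℝ} (hδ : 0 ≤ δ)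
    (hKL : ∀ x ∈ K, ∀ y ∈ L, ⟪x, y⟫ ≤ δ * ‖x‖ * ‖y‖) (z : E) :
    ‖K.starProjection (L.starProjection z)‖ ≤ δ * ‖z‖ := by
  set y := L.starProjection z
  set x := K.starProjection y
  have hx_sq : ‖x‖ ^ 2 = ⟪x, y⟫ := by
    simpa [x] using (K.re_inner_starProjection_eq_normSq y).symm
  have hxy : ‖x‖ * ‖x‖ ≤ ‖x‖ * (δ * ‖z‖) := calc
    ‖x‖ * ‖x‖ = ⟪x, y⟫ := by rw [← sq, hx_sq]
    _ ≤ δ * ‖x‖ * ‖y‖ := hKL x (K.starProjection_apply_mem y) y (L.starProjection_apply_mem z)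
    _ ≤ δ * ‖x‖ * ‖z‖ := by gcongr; exact L.norm_starProjection_apply_le z
    _ = ‖x‖ * (δ * ‖z‖) := by ring
  rcases (norm_nonneg x).eq_or_lt with hx0 | hx_pos
  · rw [← hx0]; positivity
  · exact le_of_mul_le_mul_left hxy hx_pos

end AlmostOrthogonalSubspaces

lemma l2_eq_norm {ι : Type*} [Fintype ι] (v : ι → ℝ) :
    l2 v = ‖(WithLp.toLp 2 v : EuclideanSpace ℝ ι)‖ := by
  simp [l2, EuclideanSpace.norm_eq]

lemma sparse_of_forall_notMem_eq_zero {d s : ℕ} {v : Fin d → ℝ} {K : Finset (Fin d)}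
    (hv : ∀ i ∉ K, v i = 0) (hK : #K ≤ s) : Sparse s v := by
  refine (Set.ncard_le_ncard (fun i hi => ?_) K.finite_toSet).trans ?_
  · by_contra hiK
    exact hi (hv i hiK)
  · rwa [Set.ncard_coe_finset]

lemma inner_eq_zero_of_disjoint_support {ι : Type*} [Fintype ι] {I J : Finset ι}
    (hIJ : Disjoint I J) {u v : EuclideanSpace ℝ ι} (hu : ∀ i ∉ I, u i = 0)
    (hv : ∀ i ∉ J, v i = 0) : ⟪u, v⟫ = 0 := by
  rw [PiLp.inner_apply]
  refine Finset.sum_eq_zero fun i _ => ?_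
  by_cases hi : i ∈ I
  · simp [hv i (Finset.disjoint_left.mp hIJ hi)]
  · simp [hu i hi]

lemma exists_toEuclideanLin_eq_of_mem_colSpan {m d : ℕ} {Φ : Matrix (Fin m) (Fin d) ℝ}
    {I : Finset (Fin d)} {x : EuclideanSpace ℝ (Fin m)} (hx : x ∈ colSpan Φ I) :
    ∃ u : EuclideanSpace ℝ (Fin d), (∀ i ∉ I, u i = 0) ∧ Matrix.toEuclideanLin Φ u = x := by
  induction hx using Submodule.span_induction with
  | mem y hy =>
    obtain ⟨i, hi, rfl⟩ := hy
    refine ⟨EuclideanSpace.single i 1, fun k hk => ?_, ?_⟩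
    · simp [show k ≠ i by rintro rfl; exact hk hi]
    · ext j
      simp [Matrix.toLpLin_apply, Matrix.mulVec_single]
  | zero => exact ⟨0, fun _ _ => rfl, map_zero _⟩
  | add a b _ _ ha hb =>
    obtain ⟨u, hu, rfl⟩ := ha
    obtain ⟨v, hv, rfl⟩ := hb
    exact ⟨u + v, fun i hi => by simp [hu i hi, hv i hi], map_add _ u v⟩
  | smul c a _ ha =>
    obtain ⟨u, hu, rfl⟩ := ha
    exact ⟨c • u, fun i hi => by simp [hu i hi], map_smul _ c u⟩

namespace RIC

variable {m d r : ℕ} {ε : ℝ} {Φ : Matrix (Fin m) (Fin d) ℝ} {I J : Finset (Fin d)}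
  {u v : EuclideanSpace ℝ (Fin d)}

local notation "A" => Matrix.toEuclideanLin Φ

lemma norm_bounds (hΦ : RIC Φ r ε) {K : Finset (Fin d)} (hK : #K ≤ r)
    (hu : ∀ i ∉ K, u i = 0) : (1 - ε) * ‖u‖ ≤ ‖A u‖ ∧ ‖A u‖ ≤ (1 + ε) * ‖u‖ := by
  simpa [l2_eq_norm, Matrix.toLpLin_apply] using
    hΦ u.ofLp (sparse_of_forall_notMem_eq_zero hu hK)

lemma inner_le_of_disjoint_support (hΦ : RIC Φ r ε) (hε : ε ≤ 1) (hIJ : Disjoint I J)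
    (hcard : #(I ∪ J) ≤ r) (hu : ∀ i ∉ I, u i = 0) (hv : ∀ i ∉ J, v i = 0) :
    ⟪A u, A v⟫ ≤ ε * (‖u‖ ^ 2 + ‖v‖ ^ 2) := by
  have huv := inner_eq_zero_of_disjoint_support hIJ hu hv
  have hu' : ∀ i ∉ I ∪ J, u i = 0 := fun i hi => hu i fun h => hi (mem_union_left _ h)
  have hv' : ∀ i ∉ I ∪ J, v i = 0 := fun i hi => hv i fun h => hi (mem_union_right _ h)
  have hadd : ‖A (u + v)‖ ^ 2 ≤ (1 + ε) ^ 2 * (‖u‖ ^ 2 + ‖v‖ ^ 2) := by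
    have := (hΦ.norm_bounds hcard (u := u + v) fun i hi => by simp [hu' i hi, hv' i hi]).2
    calc ‖A (u + v)‖ ^ 2 ≤ ((1 + ε) * ‖u + v‖) ^ 2 := by gcongr
      _ = (1 + ε) ^ 2 * (‖u‖ ^ 2 + ‖v‖ ^ 2) := by rw [mul_pow, norm_add_sq_real, huv]; ring
  have hsub : (1 - ε) ^ 2 * (‖u‖ ^ 2 + ‖v‖ ^ 2) ≤ ‖A (u - v)‖ ^ 2 := by
    have := (hΦ.norm_bounds hcard (u := u - v) fun i hi => by simp [hu' i hi, hv' i hi]).1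
    calc (1 - ε) ^ 2 * (‖u‖ ^ 2 + ‖v‖ ^ 2) = ((1 - ε) * ‖u - v‖) ^ 2 := by
          rw [mul_pow, norm_sub_sq_real, huv]; ring
      _ ≤ ‖A (u - v)‖ ^ 2 := by gcongr
  have hpolar : 4 * ⟪A u, A v⟫ = ‖A (u + v)‖ ^ 2 - ‖A (u - v)‖ ^ 2 := by
    rw [map_add, map_sub, norm_add_sq_real, norm_sub_sq_real]; ring
  nlinarith

lemma inner_le_two_mul_norm_mul_norm (hΦ : RIC Φ r ε) (hε : ε ≤ 1) (hIJ : Disjoint I J)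
    (hcard : #(I ∪ J) ≤ r) (hu : ∀ i ∉ I, u i = 0) (hv : ∀ i ∉ J, v i = 0) :
    ⟪A u, A v⟫ ≤ 2 * ε * ‖u‖ * ‖v‖ := by
  have hscaled := hΦ.inner_le_of_disjoint_support hε hIJ hcard (u := ‖v‖ • u) (v := ‖u‖ • v)
    (fun i hi => by simp [hu i hi]) (fun i hi => by simp [hv i hi])
  simp only [map_smul, real_inner_smul_left, real_inner_smul_right, norm_smul, norm_norm]
    at hscaled
  rcases (mul_nonneg (norm_nonneg u) (norm_nonneg v)).eq_or_lt with h0 | hpos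
  · rcases mul_eq_zero.mp h0.symm with h | h <;> simp [norm_eq_zero.mp h]
  · nlinarith

lemma inner_le_of_mem_colSpan (hΦ : RIC Φ r ε) (hε0 : 0 ≤ ε) (hε1 : ε < 1)
    (hIJ : Disjoint I J) (hcard : #(I ∪ J) ≤ r) {x y : EuclideanSpace ℝ (Fin m)}
    (hx : x ∈ colSpan Φ I) (hy : y ∈ colSpan Φ J) :
    ⟪x, y⟫ ≤ 2 * ε / (1 - ε) ^ 2 * ‖x‖ * ‖y‖ := by
  obtain ⟨u, hu, rfl⟩ := exists_toEuclideanLin_eq_of_mem_colSpan hx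
  obtain ⟨v, hv, rfl⟩ := exists_toEuclideanLin_eq_of_mem_colSpan hy
  have hAu := (hΦ.norm_bounds ((card_le_card subset_union_left).trans hcard) hu).1
  have hAv := (hΦ.norm_bounds ((card_le_card subset_union_right).trans hcard) hv).1
  have h1ε : 1 - ε ≠ 0 := by linarith
  calc ⟪A u, A v⟫ ≤ 2 * ε * ‖u‖ * ‖v‖ :=
        hΦ.inner_le_two_mul_norm_mul_norm hε1.le hIJ hcard hu hv
    _ = 2 * ε / (1 - ε) ^ 2 * ((1 - ε) * ‖u‖) * ((1 - ε) * ‖v‖) := by field_simp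
    _ ≤ 2 * ε / (1 - ε) ^ 2 * ‖A u‖ * ‖A v‖ := by gcongr

end RIC

/-- **Almost orthogonality of columns.** Under RIC with parameters
`(2s, ε)`, for disjoint `I, J` with `|I ∪ J| ≤ 2s`, the orthogonal projections onto
`range(Φ_I)` and `range(Φ_J)` satisfy `‖P_I P_J‖_{2→2} ≤ 2.2 ε`, i.e.
`‖P_I (P_J z)‖ ≤ 2.2 ε ‖z‖` for every `z ∈ ℝ^m`. -/
theorem stmt3 (m d s : ℕ) (ε : ℝ) (hε0 : 0 < ε) (hε : ε ≤ 0.03)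
    (Φ : Matrix (Fin m) (Fin d) ℝ) (hΦ : RIC Φ (2 * s) ε)
    (I J : Finset (Fin d)) (hdisj : Disjoint I J) (hcard : (I ∪ J).card ≤ 2 * s) :
    ∀ z : EuclideanSpace ℝ (Fin m),
      ‖(Submodule.orthogonalProjection (colSpan Φ I)
          ((Submodule.orthogonalProjection (colSpan Φ J) z : colSpan Φ J) : EuclideanSpace ℝ (Fin m)) :
          colSpan Φ I)‖ ≤ 2.2 * ε * ‖z‖ := by
  intro z
  have hε1 : ε < 1 := by norm_num at hε; linarith
  have hconst : 2 * ε / (1 - ε) ^ 2 ≤ 2.2 * ε := by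
    rw [div_le_iff₀ (by nlinarith)]
    have : 2 ≤ 2.2 * (1 - ε) ^ 2 := by norm_num at hε ⊢; nlinarith
    nlinarith
  calc _ ≤ 2 * ε / (1 - ε) ^ 2 * ‖z‖ :=
        norm_starProjection_starProjection_le (by positivity)
          (fun x hx y hy => hΦ.inner_le_of_mem_colSpan hε0.le hε1 hdisj hcard hx hy) z
    _ ≤ 2.2 * ε * ‖z‖ := by gcongr
end

section
/- (Approximation of the residual.) Let Φ be an m×d real matrix satisfying the restricted isometry condition with parameters (2s, ε), where 0 < ε ≤ 0.03. Let x ∈ ℝ^d be a nonzero s-sparse vector with measurements u = Φx, and let I ⊆ {1,…,d} be an index set with |supp(x) ∪ I| ≤ 2s. Define x₀ = x|_{supp(x)∖I}, u₀ = Φx₀, F = range(Φ_I), and let r = P_{F⊥}(u) be the orthogonal projection of u onto the orthogonal complement of F in ℝ^m. Then ‖u₀ − r‖₂ ≤ 2.2 ε ‖u₀‖₂. -/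
open WithLp (toLp)
open scoped Matrix RealInnerProductSpace

section EuclideanNorm

variable {ι : Type*} [Fintype ι]

lemma l2_eq_norm_toLp (v : ι → ℝ) : l2 v = ‖toLp 2 v‖ := by
  simp [l2, EuclideanSpace.norm_eq]

lemma inner_toLp_eq_zero_of_disjoint {a b : ι → ℝ} (hab : ∀ i, a i = 0 ∨ b i = 0) :
    ⟪toLp 2 a, toLp 2 b⟫ = 0 := by
  rw [EuclideanSpace.inner_toLp_toLp, dotProduct]
  exact Finset.sum_eq_zero fun i _ => mul_eq_zero.mpr ((hab i).symm.imp id (by simp +contextual))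

end EuclideanNorm

lemma Sparse.of_forall_notMem {d r : ℕ} {S : Set (Fin d)} (hS : S.ncard ≤ r) {v : Fin d → ℝ}
    (hv : ∀ i ∉ S, v i = 0) : Sparse r v :=
  (Set.ncard_le_ncard (fun i (hi : v i ≠ 0) => by_contra fun h => hi (hv i h)) S.toFinite).trans hS

lemma mem_colSpan_iff {m d : ℕ} {Φ : Matrix (Fin m) (Fin d) ℝ} {I : Finset (Fin d)}
    {y : EuclideanSpace ℝ (Fin m)} :
    y ∈ colSpan Φ I ↔ ∃ w : Fin d → ℝ, (∀ i ∉ I, w i = 0) ∧ toLp 2 (Φ *ᵥ w) = y := by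
  constructor
  · intro hy
    induction hy using Submodule.span_induction with
    | mem z hz =>
      obtain ⟨i, hi, rfl⟩ := hz
      exact ⟨Pi.single i 1, fun k hk => Pi.single_eq_of_ne (ne_of_mem_of_not_mem hi hk).symm _,
        by rw [Matrix.mulVec_single_one]; rfl⟩
    | zero => exact ⟨0, fun _ _ => rfl, by simp⟩
    | add z₁ z₂ _ _ ih₁ ih₂ =>
      obtain ⟨w₁, hw₁, rfl⟩ := ih₁
      obtain ⟨w₂, hw₂, rfl⟩ := ih₂
      exact ⟨w₁ + w₂, fun i hi => by simp [hw₁ i hi, hw₂ i hi], by simp [Matrix.mulVec_add]⟩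
    | smul c z _ ih =>
      obtain ⟨w, hw, rfl⟩ := ih
      exact ⟨c • w, fun i hi => by simp [hw i hi], by simp [Matrix.mulVec_smul]⟩
  · rintro ⟨w, hw, rfl⟩
    have hw' : w = ∑ i ∈ I, w i • Pi.single i 1 := by
      ext j
      by_cases hj : j ∈ I <;> simp [Finset.sum_apply, Pi.single_apply, hj, hw]
    rw [hw', Matrix.mulVec_sum, WithLp.toLp_sum]
    refine Submodule.sum_mem _ fun i hi => ?_
    rw [Matrix.mulVec_smul, WithLp.toLp_smul, Matrix.mulVec_single_one]
    exact Submodule.smul_mem _ _ (Submodule.subset_span ⟨i, hi, rfl⟩)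

lemma Submodule.sub_starProjection_orthogonal_of_sub_mem {𝕜 E : Type*} [RCLike 𝕜]
    [NormedAddCommGroup E] [InnerProductSpace 𝕜 E] {K : Submodule 𝕜 E} [K.HasOrthogonalProjection]
    {u v : E} (h : v - u ∈ K) : u - Kᗮ.starProjection v = K.starProjection u := by
  rw [← sub_add_cancel v u, map_add, starProjection_orthogonal_apply_eq_zero h, zero_add,
    starProjection_orthogonal_val, sub_sub_cancel]

namespace RIC

variable {m d r : ℕ} {ε : ℝ} {Φ : Matrix (Fin m) (Fin d) ℝ}

lemma le_norm_mulVec (hΦ : RIC Φ r ε) {v : Fin d → ℝ} (hv : Sparse r v) :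
    (1 - ε) * ‖toLp 2 v‖ ≤ ‖toLp 2 (Φ *ᵥ v)‖ := by
  simpa only [l2_eq_norm_toLp] using (hΦ v hv).1

lemma norm_mulVec_le (hΦ : RIC Φ r ε) {v : Fin d → ℝ} (hv : Sparse r v) :
    ‖toLp 2 (Φ *ᵥ v)‖ ≤ (1 + ε) * ‖toLp 2 v‖ := by
  simpa only [l2_eq_norm_toLp] using (hΦ v hv).2

variable {S : Set (Fin d)} {a b : Fin d → ℝ}

lemma inner_mulVec_le_add_sq (hΦ : RIC Φ r ε) (hε : ε ≤ 1) (hS : S.ncard ≤ r)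
    (ha : ∀ i ∉ S, a i = 0) (hb : ∀ i ∉ S, b i = 0) (hab : ∀ i, a i = 0 ∨ b i = 0) :
    ⟪toLp 2 (Φ *ᵥ a), toLp 2 (Φ *ᵥ b)⟫ ≤ ε * (‖toLp 2 a‖ ^ 2 + ‖toLp 2 b‖ ^ 2) := by
  have hab₀ := inner_toLp_eq_zero_of_disjoint hab
  have hadd := hΦ.norm_mulVec_le (v := a + b) (.of_forall_notMem hS fun i hi => by
    simp [ha i hi, hb i hi])
  have hsub := hΦ.le_norm_mulVec (v := a - b) (.of_forall_notMem hS fun i hi => by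
    simp [ha i hi, hb i hi])
  have hadd₂ : ‖toLp 2 (a + b)‖ ^ 2 = ‖toLp 2 a‖ ^ 2 + ‖toLp 2 b‖ ^ 2 := by
    rw [WithLp.toLp_add, norm_add_sq_real, hab₀]; ring
  have hsub₂ : ‖toLp 2 (a - b)‖ ^ 2 = ‖toLp 2 a‖ ^ 2 + ‖toLp 2 b‖ ^ 2 := by
    rw [WithLp.toLp_sub, norm_sub_sq_real, hab₀]; ring
  rw [Matrix.mulVec_add, WithLp.toLp_add 2 (Φ *ᵥ a)] at hadd
  rw [Matrix.mulVec_sub, WithLp.toLp_sub 2 (Φ *ᵥ a)] at hsub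
  have hadd' := pow_le_pow_left₀ (norm_nonneg _) hadd 2
  have hsub' := pow_le_pow_left₀ (mul_nonneg (sub_nonneg.2 hε) (norm_nonneg _)) hsub 2
  rw [mul_pow, hadd₂] at hadd'
  rw [mul_pow, hsub₂] at hsub'
  -- polarization: `4 ⟪A, B⟫ = ‖A + B‖² - ‖A - B‖²`
  nlinarith [norm_add_sq_real (toLp 2 (Φ *ᵥ a)) (toLp 2 (Φ *ᵥ b)),
    norm_sub_sq_real (toLp 2 (Φ *ᵥ a)) (toLp 2 (Φ *ᵥ b))]

lemma inner_mulVec_le (hΦ : RIC Φ r ε) (hε : ε ≤ 1) (hS : S.ncard ≤ r)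
    (ha : ∀ i ∉ S, a i = 0) (hb : ∀ i ∉ S, b i = 0) (hab : ∀ i, a i = 0 ∨ b i = 0) :
    ⟪toLp 2 (Φ *ᵥ a), toLp 2 (Φ *ᵥ b)⟫ ≤ 2 * ε * ‖toLp 2 a‖ * ‖toLp 2 b‖ := by
  rcases eq_or_ne a 0 with rfl | ha₀
  · simp
  rcases eq_or_ne b 0 with rfl | hb₀
  · simp
  have hna : 0 < ‖toLp 2 a‖ := by simpa using ha₀
  have hnb : 0 < ‖toLp 2 b‖ := by simpa using hb₀
  -- rescale `a` to the length of `b`, where `‖a‖² + ‖b‖² = 2 ‖a‖ ‖b‖`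
  set t := ‖toLp 2 b‖ / ‖toLp 2 a‖
  have ht : 0 < t := div_pos hnb hna
  have h := inner_mulVec_le_add_sq (a := t • a) hΦ hε hS (fun i hi => by simp [ha i hi]) hb
    fun i => (hab i).imp_left fun h => by simp [h]
  rw [Matrix.mulVec_smul, WithLp.toLp_smul, WithLp.toLp_smul, real_inner_smul_left, norm_smul,
    Real.norm_of_nonneg ht.le, div_mul_cancel₀ _ hna.ne'] at h
  have e : t * (2 * ε * ‖toLp 2 a‖ * ‖toLp 2 b‖) = ε * (‖toLp 2 b‖ ^ 2 + ‖toLp 2 b‖ ^ 2) := by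
    simp only [t]; field_simp; ring
  exact le_of_mul_le_mul_left (e ▸ h) ht

lemma norm_starProjection_colSpan_le (hΦ : RIC Φ r ε) (hε₀ : 0 ≤ ε) (hε₁ : ε ≤ 1)
    {I : Finset (Fin d)} (hIS : ↑I ⊆ S) (hS : S.ncard ≤ r) (haS : ∀ i ∉ S, a i = 0)
    (haI : ∀ i ∈ I, a i = 0) :
    (1 - ε) ^ 2 * ‖(colSpan Φ I).starProjection (toLp 2 (Φ *ᵥ a))‖ ≤
      2 * ε * ‖toLp 2 (Φ *ᵥ a)‖ := by
  set u := toLp 2 (Φ *ᵥ a)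
  obtain ⟨w, hwI, hwy⟩ := mem_colSpan_iff.1 ((colSpan Φ I).starProjection_apply_mem u)
  have hyu : ⟪(colSpan Φ I).starProjection u, u⟫ = ‖(colSpan Φ I).starProjection u‖ ^ 2 := by
    simpa using (colSpan Φ I).re_inner_starProjection_eq_normSq u
  rw [← hwy] at hyu ⊢
  set y := toLp 2 (Φ *ᵥ w)
  have hwS : ∀ i ∉ S, w i = 0 := fun i hi => hwI i fun h => hi (hIS h)
  have hy : ‖y‖ ^ 2 ≤ 2 * ε * ‖toLp 2 w‖ * ‖toLp 2 a‖ :=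
    hyu ▸ hΦ.inner_mulVec_le hε₁ hS hwS haS fun i => (em (i ∈ I)).symm.imp (hwI i) (haI i)
  have hw := hΦ.le_norm_mulVec (.of_forall_notMem hS hwS)
  have ha := hΦ.le_norm_mulVec (.of_forall_notMem hS haS)
  rcases (norm_nonneg y).eq_or_lt with hy₀ | hy₀
  · rw [← hy₀, mul_zero]; positivity
  refine le_of_mul_le_mul_left ?_ hy₀
  calc ‖y‖ * ((1 - ε) ^ 2 * ‖y‖) = (1 - ε) ^ 2 * ‖y‖ ^ 2 := by ring
    _ ≤ 2 * ε * ((1 - ε) * ‖toLp 2 w‖) * ((1 - ε) * ‖toLp 2 a‖) := by nlinarith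
    _ ≤ 2 * ε * ‖y‖ * ‖u‖ := by gcongr
    _ = ‖y‖ * (2 * ε * ‖u‖) := by ring

end RIC

theorem stmt4_general (m d s : ℕ) (ε : ℝ) (hε0 : 0 < ε) (hε : ε ≤ 0.03)
    (Φ : Matrix (Fin m) (Fin d) ℝ) (hΦ : RIC Φ (2 * s) ε)
    (x : Fin d → ℝ) (I : Finset (Fin d)) (hI : ({i | x i ≠ 0} ∪ ↑I).ncard ≤ 2 * s) :
    ∀ u₀ r : EuclideanSpace ℝ (Fin m),
      u₀ = Φ.mulVec (fun i => if i ∈ I then 0 else x i) →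
      r = ((Submodule.orthogonalProjection (colSpan Φ I)ᗮ
             (WithLp.toLp 2 (Φ.mulVec x) : EuclideanSpace ℝ (Fin m)) : (colSpan Φ I)ᗮ) :
           EuclideanSpace ℝ (Fin m)) →
      ‖u₀ - r‖ ≤ 2.2 * ε * ‖u₀‖ := by
  intro u₀ r hu₀ hr
  set x₀ : Fin d → ℝ := fun i => if i ∈ I then 0 else x i
  replace hu₀ : u₀ = toLp 2 (Φ *ᵥ x₀) := congrArg (toLp 2) hu₀
  have hres : u₀ - r = (colSpan Φ I).starProjection u₀ := by
    rw [hr, ← Submodule.starProjection_apply]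
    refine Submodule.sub_starProjection_orthogonal_of_sub_mem (mem_colSpan_iff.2 ⟨x - x₀, ?_, ?_⟩)
    · exact fun i hi => by simp [x₀, hi]
    · rw [hu₀, Matrix.mulVec_sub, WithLp.toLp_sub]
  have hkey := hΦ.norm_starProjection_colSpan_le hε0.le (by linarith) Set.subset_union_right hI
    (a := x₀) (fun i hi => by simp_all [x₀]) (fun i hi => by simp [x₀, hi])
  rw [← hu₀, ← hres] at hkey
  have hc : 2 * ε * ‖u₀‖ ≤ (1 - ε) ^ 2 * (2.2 * ε * ‖u₀‖) := by
    have hcoef : 2 ≤ 2.2 * (1 - ε) ^ 2 := by nlinarith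
    nlinarith [mul_le_mul_of_nonneg_right hcoef (mul_nonneg hε0.le (norm_nonneg u₀))]
  exact le_of_mul_le_mul_left (hkey.trans hc) (pow_pos (by linarith) 2)

/-- **Approximation of the residual.** Under RIC `(2s, ε)`, for a nonzero
`s`-sparse `x` with `|supp(x) ∪ I| ≤ 2s`, setting `x₀ = x|_{supp(x)∖I}`, `u₀ = Φx₀`,
`F = range(Φ_I)` and `r = P_{F⊥}(Φx)`, we have `‖u₀ − r‖₂ ≤ 2.2 ε ‖u₀‖₂`. -/
theorem stmt4 (m d s : ℕ) (ε : ℝ) (hε0 : 0 < ε) (hε : ε ≤ 0.03)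
    (Φ : Matrix (Fin m) (Fin d) ℝ) (hΦ : RIC Φ (2 * s) ε)
    (x : Fin d → ℝ) (hx : Sparse s x) (hx0 : x ≠ 0)
    (I : Finset (Fin d)) (hI : ({i | x i ≠ 0} ∪ ↑I).ncard ≤ 2 * s) :
    ∀ u₀ r : EuclideanSpace ℝ (Fin m),
      u₀ = Φ.mulVec (fun i => if i ∈ I then 0 else x i) →
      r = ((Submodule.orthogonalProjection (colSpan Φ I)ᗮ
             (WithLp.toLp 2 (Φ.mulVec x) : EuclideanSpace ℝ (Fin m)) : (colSpan Φ I)ᗮ) :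
           EuclideanSpace ℝ (Fin m)) →
      ‖u₀ - r‖ ≤ 2.2 * ε * ‖u₀‖ :=
  stmt4_general m d s ε hε0 hε Φ hΦ x I hI
end

section
/- Let Φ be an m×d real matrix and let c and r be positive integers. Then the restricted isometry constants satisfy δ_{cr} ≤ c · δ_{2r}. -/
/-- `δ` satisfies the restricted isometry inequalities of `Φ` at sparsity level `r`
(quadratic form). -/
def RICq {m d : ℕ} (Φ : Matrix (Fin m) (Fin d) ℝ) (r : ℕ) (δ : ℝ) : Prop :=
  ∀ v : Fin d → ℝ, Sparse r v →
    (1 - δ) * (l2 v) ^ 2 ≤ (l2 (Φ.mulVec v)) ^ 2 ∧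
      (l2 (Φ.mulVec v)) ^ 2 ≤ (1 + δ) * (l2 v) ^ 2

/-- The restricted isometry constant `δ_r` of `Φ`: the smallest `δ ≥ 0` satisfying the
restricted isometry inequalities at sparsity level `r`. -/
noncomputable def ricConst {m d : ℕ} (Φ : Matrix (Fin m) (Fin d) ℝ) (r : ℕ) : ℝ :=
  sInf {δ : ℝ | 0 ≤ δ ∧ RICq Φ r δ}

open Matrix

section IsometryDefect

variable {m n R : Type*} [Fintype m] [Fintype n] [CommRing R]

def isometryDefect (Φ : Matrix m n R) (x y : n → R) : R :=
  Φ *ᵥ x ⬝ᵥ Φ *ᵥ y - x ⬝ᵥ y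

theorem isometryDefect_polarization (Φ : Matrix m n R) (x y : n → R) :
    isometryDefect Φ (x + y) (x + y) - isometryDefect Φ (x - y) (x - y) =
      4 * isometryDefect Φ x y := by
  simp only [isometryDefect, mulVec_add, mulVec_sub, add_dotProduct, dotProduct_add,
    sub_dotProduct, dotProduct_sub, dotProduct_comm y x, dotProduct_comm (Φ *ᵥ y) (Φ *ᵥ x)]
  ring

theorem isometryDefect_sum_sum {ι : Type*} (Φ : Matrix m n R) (s : Finset ι) (w : ι → n → R) :
    isometryDefect Φ (∑ k ∈ s, w k) (∑ k ∈ s, w k) =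
      ∑ k ∈ s, ∑ k' ∈ s, isometryDefect Φ (w k) (w k') := by
  simp only [isometryDefect, mulVec_sum, sum_dotProduct, dotProduct_sum,
    ← Finset.sum_sub_distrib]
  exact Finset.sum_comm

end IsometryDefect

theorem indicator_dotProduct_self_add_compl {ι R : Type*} [Fintype ι] [NonUnitalNonAssocSemiring R]
    (s : Set ι) (v : ι → R) :
    s.indicator v ⬝ᵥ s.indicator v + sᶜ.indicator v ⬝ᵥ sᶜ.indicator v = v ⬝ᵥ v := by
  simp only [dotProduct, ← Finset.sum_add_distrib]
  refine Finset.sum_congr rfl fun i _ => ?_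
  by_cases hi : i ∈ s <;> simp [hi]

theorem mulVec_dotProduct_self_le {m n : Type*} [Fintype m] [Fintype n] (Φ : Matrix m n ℝ)
    (v : n → ℝ) : Φ *ᵥ v ⬝ᵥ Φ *ᵥ v ≤ (∑ i, ∑ j, Φ i j ^ 2) * (v ⬝ᵥ v) := by
  simp only [dotProduct, mulVec, ← sq]
  rw [Finset.sum_mul]
  exact Finset.sum_le_sum fun i _ => Finset.sum_mul_sq_le_sq_mul_sq _ _ _

theorem l2_sq_eq_dotProduct {ι : Type*} [Fintype ι] (v : ι → ℝ) : l2 v ^ 2 = v ⬝ᵥ v := by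
  rw [l2, Real.sq_sqrt (Finset.sum_nonneg fun i _ => sq_nonneg _)]
  simp only [dotProduct, sq]

section Sparse

variable {d : ℕ}

theorem Sparse.add {s t : ℕ} {x y : Fin d → ℝ} (hx : Sparse s x) (hy : Sparse t y) :
    Sparse (s + t) (x + y) :=
  (Set.ncard_le_ncard (Function.support_add x y)).trans <|
    (Set.ncard_union_le _ _).trans (add_le_add hx hy)

theorem Sparse.sub {s t : ℕ} {x y : Fin d → ℝ} (hx : Sparse s x) (hy : Sparse t y) :
    Sparse (s + t) (x - y) :=
  (Set.ncard_le_ncard (Function.support_sub x y)).trans <|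
    (Set.ncard_union_le _ _).trans (add_le_add hx hy)

theorem Sparse.eq_zero {v : Fin d → ℝ} (hv : Sparse 0 v) : v = 0 :=
  Function.support_eq_empty_iff.1 ((Set.ncard_eq_zero (Set.toFinite _)).1 (Nat.le_zero.1 hv))

theorem Sparse.exists_sum_eq {c r : ℕ} {v : Fin d → ℝ} (hv : Sparse (c * r) v) :
    ∃ w : Fin c → Fin d → ℝ, (∀ k, Sparse r (w k)) ∧ ∑ k, w k = v ∧
      ∑ k, w k ⬝ᵥ w k = v ⬝ᵥ v := by
  induction c generalizing v with
  | zero =>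
    obtain rfl := (zero_mul r ▸ hv).eq_zero
    exact ⟨0, fun k => k.elim0, by simp, by simp⟩
  | succ c ih =>
    obtain ⟨B, hBv, hB⟩ := Set.exists_subset_card_eq (min_le_right r (Function.support v).ncard)
    have hhead : Sparse r (B.indicator v) := by
      rw [Sparse, ← Function.support, Set.support_indicator, Set.inter_eq_left.2 hBv, hB]
      exact min_le_left _ _
    have htail : Sparse (c * r) (Bᶜ.indicator v) := by
      rw [Sparse, ← Function.support, Set.support_indicator, Set.inter_comm, ← Set.sdiff_eq,
        Set.ncard_sdiff hBv, hB]
      have : (Function.support v).ncard ≤ c * r + r := by rw [← Nat.succ_mul]; exact hv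
      omega
    obtain ⟨w, hw, hsum, hnorm⟩ := ih htail
    refine ⟨Fin.cons (B.indicator v) w, Fin.cons hhead hw, ?_, ?_⟩
    · rw [Fin.sum_univ_succ]
      simp only [Fin.cons_zero, Fin.cons_succ, hsum, Set.indicator_self_add_compl]
    · rw [Fin.sum_univ_succ]
      simp only [Fin.cons_zero, Fin.cons_succ, hnorm, indicator_dotProduct_self_add_compl]

end Sparse

section RIP

variable {m d : ℕ} {Φ : Matrix (Fin m) (Fin d) ℝ}

theorem ricq_iff_abs_isometryDefect_le {s : ℕ} {δ : ℝ} :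
    RICq Φ s δ ↔ ∀ v, Sparse s v → |isometryDefect Φ v v| ≤ δ * (v ⬝ᵥ v) := by
  simp only [RICq, l2_sq_eq_dotProduct, isometryDefect, abs_le]
  refine forall₂_congr fun v _ => ⟨fun h => ⟨?_, ?_⟩, fun h => ⟨?_, ?_⟩⟩ <;> linarith [h.1, h.2]

theorem abs_isometryDefect_le_of_ricq {r : ℕ} {δ : ℝ} (h : RICq Φ (2 * r) δ) {x y : Fin d → ℝ}
    (hx : Sparse r x) (hy : Sparse r y) :
    |isometryDefect Φ x y| ≤ δ / 2 * (x ⬝ᵥ x + y ⬝ᵥ y) := by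
  rw [ricq_iff_abs_isometryDefect_le] at h
  have hadd := abs_le.1 (h _ (two_mul r ▸ hx.add hy))
  have hsub := abs_le.1 (h _ (two_mul r ▸ hx.sub hy))
  have hpol := isometryDefect_polarization Φ x y
  have hpar : (x + y) ⬝ᵥ (x + y) + (x - y) ⬝ᵥ (x - y) = 2 * (x ⬝ᵥ x + y ⬝ᵥ y) := by
    simp only [add_dotProduct, dotProduct_add, sub_dotProduct, dotProduct_sub, dotProduct_comm y x]
    ring
  have hδpar := congrArg (δ * ·) hpar
  simp only [mul_add] at hδpar
  rw [abs_le]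
  constructor <;> linarith [hadd.1, hadd.2, hsub.1, hsub.2]

theorem RICq.mul {c r : ℕ} {δ : ℝ} (h : RICq Φ (2 * r) δ) : RICq Φ (c * r) (c * δ) := by
  rw [ricq_iff_abs_isometryDefect_le]
  intro v hv
  obtain ⟨w, hw, rfl, hnorm⟩ := hv.exists_sum_eq
  calc |isometryDefect Φ (∑ k, w k) (∑ k, w k)|
      ≤ ∑ k, ∑ k', |isometryDefect Φ (w k) (w k')| := by
        rw [isometryDefect_sum_sum]
        exact (Finset.abs_sum_le_sum_abs _ _).trans
          (Finset.sum_le_sum fun k _ => Finset.abs_sum_le_sum_abs _ _)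
    _ ≤ ∑ k, ∑ k', δ / 2 * (w k ⬝ᵥ w k + w k' ⬝ᵥ w k') :=
        Finset.sum_le_sum fun k _ => Finset.sum_le_sum fun k' _ =>
          abs_isometryDefect_le_of_ricq h (hw k) (hw k')
    _ = c * δ * ((∑ k, w k) ⬝ᵥ (∑ k, w k)) := by
        simp only [← hnorm, mul_add, Finset.sum_add_distrib, ← Finset.mul_sum, Finset.sum_const,
          Finset.card_univ, Fintype.card_fin, nsmul_eq_mul]
        ring

theorem exists_ricq (Φ : Matrix (Fin m) (Fin d) ℝ) (s : ℕ) : ∃ δ, 0 ≤ δ ∧ RICq Φ s δ := by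
  refine ⟨1 + ∑ i, ∑ j, Φ i j ^ 2, by positivity, ricq_iff_abs_isometryDefect_le.2 fun v _ => ?_⟩
  have hv : 0 ≤ v ⬝ᵥ v := dotProduct_self_star_nonneg v
  have hΦv : 0 ≤ Φ *ᵥ v ⬝ᵥ Φ *ᵥ v := dotProduct_self_star_nonneg _
  have hbound := mulVec_dotProduct_self_le Φ v
  rw [isometryDefect, abs_le]
  constructor <;> nlinarith

end RIP

theorem stmt8_general (m d c r : ℕ) (Φ : Matrix (Fin m) (Fin d) ℝ) :
    ricConst Φ (c * r) ≤ (c : ℝ) * ricConst Φ (2 * r) := by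
  obtain ⟨δ, hδ⟩ := exists_ricq Φ (2 * r)
  rw [ricConst, ricConst, ← smul_eq_mul (c : ℝ), ← Real.sInf_smul_of_nonneg (Nat.cast_nonneg c)]
  refine csInf_le_csInf ⟨0, fun _ h => h.1⟩ (Set.Nonempty.smul_set ⟨δ, hδ⟩) ?_
  rintro _ ⟨δ, ⟨hδ0, hδ⟩, rfl⟩
  exact ⟨by positivity, hδ.mul⟩

/-- For positive integers `c` and `r`, `δ_{cr} ≤ c · δ_{2r}`. -/
theorem stmt8 (m d c r : ℕ) (hc : 0 < c) (hr : 0 < r)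
    (Φ : Matrix (Fin m) (Fin d) ℝ) :
    ricConst Φ (c * r) ≤ (c : ℝ) * ricConst Φ (2 * r) :=
  stmt8_general m d c r Φ
end
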